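/- Let d ≥ 1, let μ be a compactly supported probability measure on ℝ^d, and let σ > 0. Define the smoothed squared-distance dist²_μ(x, σ) := -2σ² log(∫ exp(-‖y - x‖²/(2σ²)) dμ(y)). Then x ↦ dist²_μ(x, σ) is differentiable on ℝ^d and its gradient satisfies ∇_x dist²_μ(x, σ) = 2(x - m_σ(x)), where m_σ(x) := (∫ y exp(-‖y - x‖²/(2σ²)) dμ(y)) / (∫ exp(-‖y - x‖²/(2σ²)) dμ(y)). -/

import Mathlib

open MeasureTheory Real Set

def mSupport {α : Type*} [TopologicalSpace α] [MeasurableSpace α]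
    (μ : Measure α) : Set α :=
  {x | ∀ U ∈ nhds x, 0 < μ U}

noncomputable def smDist2 {d : ℕ} (μ : Measure (EuclideanSpace ℝ (Fin d)))
    (x : EuclideanSpace ℝ (Fin d)) (σ : ℝ) : ℝ :=
  -2 * σ ^ 2 * Real.log (∫ y, Real.exp (-‖y - x‖ ^ 2 / (2 * σ ^ 2)) ∂μ)

noncomputable def gaussMean {d : ℕ} (μ : Measure (EuclideanSpace ℝ (Fin d)))
    (x : EuclideanSpace ℝ (Fin d)) (σ : ℝ) : EuclideanSpace ℝ (Fin d) :=
  (∫ y, Real.exp (-‖y - x‖ ^ 2 / (2 * σ ^ 2)) ∂μ)⁻¹ •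
    ∫ y, Real.exp (-‖y - x‖ ^ 2 / (2 * σ ^ 2)) • y ∂μ

lemma gaussDeriv {E : Type*} [NormedAddCommGroup E] [InnerProductSpace ℝ E] (σ : ℝ) (y x : E) :
    HasFDerivAt (fun x' : E => Real.exp (-‖y - x'‖ ^ 2 / (2 * σ ^ 2)))
      ((Real.exp (-‖y - x‖ ^ 2 / (2 * σ ^ 2)) * (σ ^ 2)⁻¹) • innerSL ℝ (y - x)) x := by
  have h0 : HasFDerivAt (fun x' : E => y - x') (-(ContinuousLinearMap.id ℝ E)) x :=
    (hasFDerivAt_id x).const_sub y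
  have h3 := (h0.norm_sq.const_mul (-(2 * σ ^ 2)⁻¹)).exp
  have heq : ∀ a : ℝ, -a / (2 * σ ^ 2) = -(2 * σ ^ 2)⁻¹ * a := fun a => by ring
  simp only [heq]
  convert h3 using 1
  ext v
  simp [real_inner_smul_left, two_smul]
  ring

lemma ae_mem_mSupport {α : Type*} [TopologicalSpace α] [MeasurableSpace α]
    [SecondCountableTopology α] [OpensMeasurableSpace α] (μ : Measure α) :
    ∀ᵐ x ∂μ, x ∈ mSupport μ := by
  rw [ae_iff]
  refine measure_null_of_locally_null _ fun x hx => ?_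
  simp only [mem_setOf_eq, mSupport] at hx
  push_neg at hx
  obtain ⟨U, hU, hμU⟩ := hx
  exact ⟨U, nhdsWithin_le_nhds hU, le_antisymm hμU zero_le⟩

/-- For a compactly supported probability measure `μ` on `ℝ^d` and `σ > 0`, the
smoothed squared-distance `x ↦ dist²_μ(x, σ)` is differentiable with gradient
`∇_x dist²_μ(x, σ) = 2(x - m_σ(x))`. -/
theorem stmt5 {d : ℕ} (hd : 1 ≤ d) (μ : Measure (EuclideanSpace ℝ (Fin d)))
    [IsProbabilityMeasure μ] (hsupp : IsCompact (mSupport μ))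
    (σ : ℝ) (hσ : 0 < σ) :
    ∀ x : EuclideanSpace ℝ (Fin d),
      HasGradientAt (fun x' => smDist2 μ x' σ) ((2 : ℝ) • (x - gaussMean μ x σ)) x := by
  intro x
  have hσ2 : (σ : ℝ) ^ 2 ≠ 0 := pow_ne_zero _ hσ.ne'
  -- a.e. bound on ‖y‖
  obtain ⟨R, hR⟩ := hsupp.isBounded.subset_closedBall 0
  have haeR : ∀ᵐ y ∂μ, ‖y‖ ≤ R := by
    filter_upwards [ae_mem_mSupport μ] with y hy
    simpa using hR hy
  set φ : (EuclideanSpace ℝ (Fin d)) → (EuclideanSpace ℝ (Fin d)) → ℝ := fun x' y => Real.exp (-‖y - x'‖ ^ 2 / (2 * σ ^ 2)) with hφ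
  have hφpos : ∀ x' y, 0 < φ x' y := fun _ _ => Real.exp_pos _
  have hφle : ∀ x' y, φ x' y ≤ 1 := fun x' y =>
    Real.exp_le_one_iff.2 (div_nonpos_of_nonpos_of_nonneg (neg_nonpos.2 (by positivity)) (by positivity))
  have hφcont : ∀ x', Continuous (φ x') := by
    intro x'; apply Real.continuous_exp.comp; fun_prop
  have hφmeas : ∀ x', AEStronglyMeasurable (φ x') μ := fun x' => (hφcont x').aestronglyMeasurable
  have hφint : ∀ x', Integrable (φ x') μ := fun x' =>
    (integrable_const (1 : ℝ)).mono' (hφmeas x')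
      (Filter.Eventually.of_forall fun y => by rw [Real.norm_eq_abs, abs_of_pos (hφpos x' y)]; exact hφle x' y)
  set G : (EuclideanSpace ℝ (Fin d)) → ℝ := fun x' => ∫ y, φ x' y ∂μ with hG
  -- positivity of G x
  have hGpos : 0 < G x := by
    have hc : (0 : ℝ) < Real.exp (-(R + ‖x‖) ^ 2 / (2 * σ ^ 2)) := Real.exp_pos _
    have hle : (fun _ : (EuclideanSpace ℝ (Fin d)) => Real.exp (-(R + ‖x‖) ^ 2 / (2 * σ ^ 2))) ≤ᵐ[μ] φ x := by
      filter_upwards [haeR] with y hy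
      have h1 : ‖y - x‖ ≤ R + ‖x‖ := (norm_sub_le y x).trans (by linarith)
      have h2 : ‖y - x‖ ^ 2 ≤ (R + ‖x‖) ^ 2 := pow_le_pow_left₀ (norm_nonneg _) h1 2
      refine Real.exp_le_exp.2 ?_
      rw [div_le_div_iff₀ (by positivity) (by positivity)]
      nlinarith
    have := integral_mono_ae (integrable_const _) (hφint x) hle
    rw [integral_const, probReal_univ] at this
    simp only [ENNReal.toReal_one, one_smul] at this; exact lt_of_lt_of_le hc this
  set I : (EuclideanSpace ℝ (Fin d)) := ∫ y, φ x y • y ∂μ with hI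
  set F' : (EuclideanSpace ℝ (Fin d)) → (EuclideanSpace ℝ (Fin d)) → ((EuclideanSpace ℝ (Fin d)) →L[ℝ] ℝ) := fun x' y => (φ x' y * (σ ^ 2)⁻¹) • innerSL ℝ (y - x') with hF'
  -- bound on the derivative
  have hbound : ∀ᵐ y ∂μ, ∀ x' ∈ Metric.ball x 1,
      ‖F' x' y‖ ≤ (σ ^ 2)⁻¹ * (R + ‖x‖ + 1) := by
    filter_upwards [haeR] with y hy x' hx'
    have hx'n : ‖x'‖ ≤ ‖x‖ + 1 := by
      have h := mem_ball_iff_norm.1 hx'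
      calc ‖x'‖ = ‖x' - x + x‖ := by rw [sub_add_cancel]
        _ ≤ ‖x' - x‖ + ‖x‖ := norm_add_le _ _
        _ ≤ ‖x‖ + 1 := by linarith
    have h1 : ‖y - x'‖ ≤ R + ‖x‖ + 1 := by
      calc ‖y - x'‖ ≤ ‖y‖ + ‖x'‖ := norm_sub_le _ _
        _ ≤ R + (‖x‖ + 1) := add_le_add hy hx'n
        _ = R + ‖x‖ + 1 := by ring
    simp only [hF']
    refine (norm_smul_le (φ x' y * (σ ^ 2)⁻¹) (innerSL ℝ (y - x'))).trans ?_
    rw [Real.norm_eq_abs, innerSL_apply_norm,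
      abs_of_pos (by positivity : (0:ℝ) < φ x' y * (σ ^ 2)⁻¹)]
    calc φ x' y * (σ ^ 2)⁻¹ * ‖y - x'‖ ≤ 1 * (σ ^ 2)⁻¹ * (R + ‖x‖ + 1) := by
          apply mul_le_mul _ h1 (norm_nonneg _) (by positivity)
          exact mul_le_mul_of_nonneg_right (hφle x' y) (by positivity)
      _ = (σ ^ 2)⁻¹ * (R + ‖x‖ + 1) := by ring
  have hF'cont : Continuous (F' x) := by
    show Continuous (fun y => (φ x y * (σ ^ 2)⁻¹) • innerSL ℝ (y - x))
    apply Continuous.fun_smul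
    · exact ((hφcont x).mul continuous_const)
    · exact (innerSL ℝ).continuous.comp (continuous_id.sub continuous_const)
  have hKey : HasFDerivAt G (∫ y, F' x y ∂μ) x := by
    apply hasFDerivAt_integral_of_dominated_of_fderiv_le (hs := Metric.ball_mem_nhds x one_pos)
      (bound := fun _ => (σ ^ 2)⁻¹ * (R + ‖x‖ + 1))
      (Filter.Eventually.of_forall fun x' => hφmeas x') (hφint x) hF'cont.aestronglyMeasurable
      hbound (integrable_const _)
    exact Filter.Eventually.of_forall fun y x' _ => gaussDeriv σ y x'
  -- rewrite the derivative as innerSL of a vector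
  set w : (EuclideanSpace ℝ (Fin d)) := (σ ^ 2)⁻¹ • (I - G x • x) with hw
  have hkint : Integrable (fun y => (φ x y * (σ ^ 2)⁻¹) • (y - x)) μ := by
    apply (integrable_const ((σ ^ 2)⁻¹ * (R + 1 + ‖x‖))).mono'
    · exact (((hφcont x).mul continuous_const).smul
        (continuous_id.sub continuous_const)).aestronglyMeasurable
    · filter_upwards [haeR] with y hy
      rw [norm_smul, Real.norm_eq_abs, abs_of_pos (by positivity : (0:ℝ) < φ x y * (σ ^ 2)⁻¹)]
      have h1 : ‖y - x‖ ≤ R + ‖x‖ := (norm_sub_le _ _).trans (by linarith)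
      calc φ x y * (σ ^ 2)⁻¹ * ‖y - x‖ ≤ 1 * (σ ^ 2)⁻¹ * (R + 1 + ‖x‖) := by
            apply mul_le_mul _ (h1.trans (by linarith)) (norm_nonneg _) (by positivity)
            exact mul_le_mul_of_nonneg_right (hφle x y) (by positivity)
        _ = (σ ^ 2)⁻¹ * (R + 1 + ‖x‖) := by ring
  have hIint : Integrable (fun y => φ x y • y) μ := by
    apply (integrable_const R).mono' ((hφcont x).smul continuous_id).aestronglyMeasurable
    filter_upwards [haeR] with y hy
    show ‖φ x y • y‖ ≤ R
    rw [norm_smul, Real.norm_eq_abs, abs_of_pos (hφpos x y)]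
    calc φ x y * ‖y‖ ≤ 1 * R := by
          apply mul_le_mul (hφle x y) hy (norm_nonneg _) zero_le_one
      _ = R := one_mul R
  have hint_eq : (∫ y, F' x y ∂μ) = innerSL ℝ w := by
    have h1 : ∀ y, F' x y = innerSL ℝ ((φ x y * (σ ^ 2)⁻¹) • (y - x)) := fun y => by
      simp only [hF', _root_.map_smul]
    have h2 : ∀ y : (EuclideanSpace ℝ (Fin d)), (φ x y * (σ ^ 2)⁻¹) • (y - x)
        = (σ ^ 2)⁻¹ • (φ x y • y - φ x y • x) := fun y => by
      rw [mul_comm, ← smul_smul, smul_sub]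
    calc (∫ y, F' x y ∂μ)
        = ∫ y, innerSL ℝ ((φ x y * (σ ^ 2)⁻¹) • (y - x)) ∂μ := by simp only [h1]
      _ = innerSL ℝ (∫ y, (φ x y * (σ ^ 2)⁻¹) • (y - x) ∂μ) :=
          ContinuousLinearMap.integral_comp_comm _ hkint
      _ = innerSL ℝ w := by
          congr 1
          simp only [h2]
          rw [integral_smul, integral_sub hIint ((hφint x).smul_const x),
            integral_smul_const, hw, hI, hG]
  rw [hint_eq] at hKey
  -- chain rule
  have hlog : HasDerivAt Real.log (G x)⁻¹ (G x) := Real.hasDerivAt_log hGpos.ne'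
  have hcomp : HasFDerivAt (fun x' => Real.log (G x')) ((G x)⁻¹ • innerSL ℝ w) x :=
    hlog.comp_hasFDerivAt x hKey
  have hfinal := hcomp.const_mul (-2 * σ ^ 2)
  -- identify with the gradient
  have hgm : gaussMean μ x σ = (G x)⁻¹ • I := rfl
  have htd : ∀ v : (EuclideanSpace ℝ (Fin d)), ((InnerProductSpace.toDual ℝ (EuclideanSpace ℝ (Fin d))) v : (EuclideanSpace ℝ (Fin d)) →L[ℝ] ℝ) = innerSL ℝ v := fun v => by
    ext u
    simp [InnerProductSpace.toDual_apply_apply]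
  rw [hasGradientAt_iff_hasFDerivAt]
  have hvec : (2 : ℝ) • (x - gaussMean μ x σ) = (-2 * σ ^ 2 * (G x)⁻¹) • w := by
    rw [hgm, hw]
    match_scalars <;> · field_simp; try ring
  have hCLM : (InnerProductSpace.toDual ℝ (EuclideanSpace ℝ (Fin d))) ((2 : ℝ) • (x - gaussMean μ x σ))
      = (-2 * σ ^ 2) • ((G x)⁻¹ • innerSL ℝ w) := by
    rw [hvec, _root_.map_smul, htd, smul_smul]
  rw [hCLM]
  exact hfinal
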